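/- Let C be a combinatorial (v,b,r,k)-configuration with n-anonymous neighborhoods. Then the relation 'having the same neighborhood' induces a partition G = {g_1, …, g_m} of the point set such that every part has cardinality at least n, no two distinct points in the same part are collinear, r ≥ n, and m ≥ k. -/

import Mathlib

/-!
Two points with the same neighborhood are never collinear: a line through both would put
each in the other's neighborhood, hence in its own. So a line meets every anonymity class
at most once, which gives `k ≤ m`. And if `q` is a neighbor of `p`, it is a neighbor of every
point of the class of `p`; the lines joining `q` to these points are pairwise distinct, so
the class has at most `r` points.
-/

open Finset

variable {P : Type*}

/-- Two points are collinear if they are equal or some line contains both. -/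
def Collin [DecidableEq P] (L : Finset (Finset P)) (p q : P) : Prop :=
  p = q ∨ ∃ l ∈ L, p ∈ l ∧ q ∈ l

/-- The (open) neighborhood `N p` of a point `p`: the points collinear with `p`
and different from `p`. -/
def nbhd [Fintype P] [DecidableEq P] (L : Finset (Finset P)) (p : P) : Finset P :=
  Finset.univ.filter fun q => q ≠ p ∧ ∃ l ∈ L, p ∈ l ∧ q ∈ l

/-- The closed neighborhood `CN p` of a point `p`: its neighborhood together with `p`. -/
def cnbhd [Fintype P] [DecidableEq P] (L : Finset (Finset P)) (p : P) : Finset P :=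
  insert p (nbhd L p)

/-- A combinatorial `(v,b,r,k)`-configuration: `v` points, `b` lines, every line
has exactly `k ≥ 2` points, every point is on exactly `r ≥ 1` lines, and any two
distinct points are on at most one common line. -/
def IsConfiguration [Fintype P] [DecidableEq P] (L : Finset (Finset P))
    (v b r k : ℕ) : Prop :=
  Fintype.card P = v ∧ L.card = b ∧ 2 ≤ k ∧ 1 ≤ r ∧
  (∀ l ∈ L, l.card = k) ∧
  (∀ p : P, (L.filter fun l => p ∈ l).card = r) ∧
  (∀ p q : P, p ≠ q → (L.filter fun l => p ∈ l ∧ q ∈ l).card ≤ 1)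

/-- The anonymity class of a point `p`: the set of points with the same
neighborhood as `p`. -/
def anonClass [Fintype P] [DecidableEq P] (L : Finset (Finset P)) (p : P) :
    Finset P :=
  Finset.univ.filter fun q => nbhd L q = nbhd L p

section

variable [Fintype P] [DecidableEq P] {L : Finset (Finset P)}

theorem mem_nbhd {p q : P} : q ∈ nbhd L p ↔ q ≠ p ∧ ∃ l ∈ L, p ∈ l ∧ q ∈ l := by
  simp [nbhd]

theorem mem_anonClass {p q : P} : q ∈ anonClass L p ↔ nbhd L q = nbhd L p := by
  simp [anonClass]

theorem mem_anonClass_self (p : P) : p ∈ anonClass L p :=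
  mem_anonClass.mpr rfl

theorem anonClass_eq_or_disjoint (p q : P) :
    anonClass L p = anonClass L q ∨ Disjoint (anonClass L p) (anonClass L q) := by
  refine or_iff_not_imp_right.mpr fun h => ?_
  obtain ⟨x, hxp, hxq⟩ := not_disjoint_iff.mp h
  ext y
  simp only [mem_anonClass, ← mem_anonClass.mp hxp, ← mem_anonClass.mp hxq]

theorem not_collin_of_mem_anonClass {p q : P} (hq : q ∈ anonClass L p) (hne : q ≠ p) :
    ¬Collin L p q := by
  rintro (rfl | ⟨l, hl, hp, hql⟩)
  · exact hne rfl
  · have hqp : q ∈ nbhd L p := mem_nbhd.mpr ⟨hne, l, hl, hp, hql⟩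
    rw [← mem_anonClass.mp hq, mem_nbhd] at hqp
    exact hqp.1 rfl

theorem eq_of_mem_anonClass_of_mem_line {p x y : P} {l : Finset P} (hl : l ∈ L)
    (hx : x ∈ anonClass L p) (hy : y ∈ anonClass L p) (hxl : x ∈ l) (hyl : y ∈ l) :
    x = y := by
  by_contra hne
  have hyx : y ∈ anonClass L x := by
    rw [mem_anonClass, mem_anonClass.mp hx, mem_anonClass.mp hy]
  exact not_collin_of_mem_anonClass hyx (Ne.symm hne) (Or.inr ⟨l, hl, hxl, hyl⟩)

theorem card_anonClass_le_card_lines_through {p q : P} (hq : q ∈ nbhd L p) :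
    #(anonClass L p) ≤ #(L.filter fun l => q ∈ l) := by
  refine card_le_card_of_forall_subsingleton (fun x l => x ∈ l) (fun x hx => ?_)
    fun l hl x ⟨hx, hxl⟩ y ⟨hy, hyl⟩ =>
      eq_of_mem_anonClass_of_mem_line (mem_filter.mp hl).1 hx hy hxl hyl
  rw [← mem_anonClass.mp hx, mem_nbhd] at hq
  obtain ⟨-, l, hl, hxl, hql⟩ := hq
  exact ⟨l, mem_filter.mpr ⟨hl, hql⟩, hxl⟩

theorem card_line_le_card_anonClasses {l : Finset P} (hl : l ∈ L) :
    #l ≤ #(univ.image fun p : P => anonClass L p) := by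
  refine le_trans (le_of_eq ?_) (card_le_card (image_subset_image (subset_univ l)))
  refine (card_image_of_injOn fun x hx y hy hxy => ?_).symm
  have hyx : y ∈ anonClass L x := (congrArg (y ∈ ·) hxy).mpr (mem_anonClass_self y)
  exact eq_of_mem_anonClass_of_mem_line hl (mem_anonClass_self x) hyx hx hy

end

namespace IsConfiguration

variable [Fintype P] [DecidableEq P] {L : Finset (Finset P)} {v b r k : ℕ}

theorem card_line (hC : IsConfiguration L v b r k) {l : Finset P} (hl : l ∈ L) : #l = k :=
  hC.2.2.2.2.1 l hl

theorem card_lines_through (hC : IsConfiguration L v b r k) (p : P) :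
    #(L.filter fun l => p ∈ l) = r :=
  hC.2.2.2.2.2.1 p

theorem exists_line_mem (hC : IsConfiguration L v b r k) (p : P) : ∃ l ∈ L, p ∈ l := by
  obtain ⟨l, hl⟩ : (L.filter fun l => p ∈ l).Nonempty := by
    rw [← card_pos, hC.card_lines_through p]
    exact hC.2.2.2.1
  exact ⟨l, (mem_filter.mp hl).1, (mem_filter.mp hl).2⟩

theorem nbhd_nonempty (hC : IsConfiguration L v b r k) (p : P) : (nbhd L p).Nonempty := by
  obtain ⟨l, hl, hp⟩ := hC.exists_line_mem p
  have hl_card : 1 < #l := by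
    rw [hC.card_line hl]
    exact hC.2.2.1
  obtain ⟨q, hql, hqp⟩ := exists_mem_ne hl_card p
  exact ⟨q, mem_nbhd.mpr ⟨hqp, l, hl, hp, hql⟩⟩

end IsConfiguration

/-- In a combinatorial `(v,b,r,k)`-configuration with `n`-anonymous
neighborhoods, the relation of having the same neighborhood induces a partition
of the point set whose parts (the anonymity classes) have cardinality at least
`n`, no two distinct points of the same part are collinear, `r ≥ n`, and the
number `m` of parts satisfies `m ≥ k`. -/
theorem anonymous_neighborhoods_structure {P : Type*} [Fintype P]
    [DecidableEq P] [Nonempty P] (L : Finset (Finset P)) (v b r k n : ℕ)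
    (hC : IsConfiguration L v b r k)
    (hanon : ∀ p : P, n ≤ (anonClass L p).card) :
    (∀ p : P, p ∈ anonClass L p) ∧
    (∀ p q : P, anonClass L p = anonClass L q ∨
      Disjoint (anonClass L p) (anonClass L q)) ∧
    (∀ p : P, n ≤ (anonClass L p).card) ∧
    (∀ p q : P, q ∈ anonClass L p → q ≠ p → ¬Collin L p q) ∧
    n ≤ r ∧
    k ≤ (Finset.univ.image fun p : P => anonClass L p).card := by
  obtain ⟨p⟩ := ‹Nonempty P›
  refine ⟨mem_anonClass_self, anonClass_eq_or_disjoint, hanon,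
    fun _ _ => not_collin_of_mem_anonClass, ?_, ?_⟩
  · obtain ⟨q, hq⟩ := hC.nbhd_nonempty p
    calc n ≤ #(anonClass L p) := hanon p
      _ ≤ #(L.filter fun l => q ∈ l) := card_anonClass_le_card_lines_through hq
      _ = r := hC.card_lines_through q
  · obtain ⟨l, hl, -⟩ := hC.exists_line_mem p
    rw [← hC.card_line hl]
    exact card_line_le_card_anonClasses hl
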